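/- Let α > 0 and let m, k be real numbers with k ≥ 2 and m > k + 4α(α + 1). Then for every r > 0: −m·f″(r)/f(r) − k·G″(r)/G(r) − h″(r)/h(r) > 0, where f(r) = r·(1+r²)^(−1/4), G(r) = r/arctan r, and h(r) = (1+r²)^(−α/2). -/

import Mathlib

noncomputable def f (r : ℝ) : ℝ := r * (1 + r ^ 2) ^ (-(1 / 4 : ℝ))

noncomputable def G (r : ℝ) : ℝ := r / Real.arctan r

noncomputable def h (α r : ℝ) : ℝ := (1 + r ^ 2) ^ (-(α / 2))

/-!
The three ratios are explicit: `f''/f = -(6 + r²) / (4 (1 + r²)²)`,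
`h''/h = α ((α + 1) r² - 1) / (1 + r²)²` and `G''/G = 2 (r - arctan r) / (r arctan² r (1 + r²)²)`.
The rational lower bound `arctan r ≥ 3r / (3 + r²)` gives `G''/G ≤ -f''/f`, so for `k ≥ 0` the
expression is at least `((m - k)(6 + r²) - 4α(α + 1) r² + 4α) / (4 (1 + r²)²)`, which is positive
once `m - k > 4α(α + 1)`.
-/

open Real

lemma div_three_add_sq_le_arctan {x : ℝ} (hx : 0 ≤ x) : 3 * x / (3 + x ^ 2) ≤ arctan x := by
  have hmono : Monotone fun y : ℝ => arctan y - 3 * y / (3 + y ^ 2) := by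
    refine monotone_of_deriv_nonneg (fun y => ?_) fun y => ?_
    · exact differentiable_arctan.differentiableAt.sub (by fun_prop (disch := positivity))
    · have hd : HasDerivAt (fun y : ℝ => arctan y - 3 * y / (3 + y ^ 2))
          (1 / (1 + y ^ 2) - (3 * (3 + y ^ 2) - 3 * y * (2 * y)) / (3 + y ^ 2) ^ 2) y := by
        refine (hasDerivAt_arctan y).sub (HasDerivAt.div ?_ ?_ (by positivity))
        · simpa using (hasDerivAt_id y).const_mul (3 : ℝ)
        · simpa using (hasDerivAt_pow 2 y).const_add (3 : ℝ)
      -- the derivative is `4 y⁴ / ((1 + y²) (3 + y²)²)`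
      rw [hd.deriv, sub_nonneg, div_le_div_iff₀ (by positivity) (by positivity)]
      nlinarith [pow_nonneg (sq_nonneg y) 2]
  simpa using hmono hx

section OneAddSqRpow

variable (p : ℝ)

lemma hasDerivAt_one_add_sq_rpow (x : ℝ) :
    HasDerivAt (fun y : ℝ => (1 + y ^ 2) ^ p) (2 * p * x * (1 + x ^ 2) ^ (p - 1)) x := by
  convert ((hasDerivAt_pow 2 x).const_add 1).rpow_const (p := p) (Or.inl (by positivity)) using 1
  push_cast
  ring

lemma differentiable_one_add_sq_rpow : Differentiable ℝ fun y : ℝ => (1 + y ^ 2) ^ p :=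
  fun x => (hasDerivAt_one_add_sq_rpow p x).differentiableAt

lemma deriv_one_add_sq_rpow (x : ℝ) :
    deriv (fun y : ℝ => (1 + y ^ 2) ^ p) x = 2 * p * x / (1 + x ^ 2) * (1 + x ^ 2) ^ p := by
  rw [(hasDerivAt_one_add_sq_rpow p x).deriv, rpow_sub_one (by positivity)]
  ring

lemma hasDerivAt_deriv_one_add_sq_rpow (x : ℝ) :
    HasDerivAt (deriv fun y : ℝ => (1 + y ^ 2) ^ p)
      (2 * p * (1 + (2 * p - 1) * x ^ 2) / (1 + x ^ 2) ^ 2 * (1 + x ^ 2) ^ p) x := by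
  have hx : (1 + x ^ 2) ≠ 0 := by positivity
  rw [funext fun y => (hasDerivAt_one_add_sq_rpow p y).deriv]
  refine (((hasDerivAt_id' x).const_mul (2 * p)).fun_mul
    (hasDerivAt_one_add_sq_rpow (p - 1) x)).congr_deriv ?_
  rw [rpow_sub_one hx (p - 1), rpow_sub_one hx p]
  field_simp
  ring

end OneAddSqRpow

lemma deriv_deriv_id_mul {g : ℝ → ℝ} (hg : Differentiable ℝ g) {x : ℝ}
    (hg' : DifferentiableAt ℝ (deriv g) x) :
    deriv (deriv fun y => y * g y) x = 2 * deriv g x + x * deriv (deriv g) x := by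
  have hd : deriv (fun y => y * g y) = fun y => g y + y * deriv g y := by
    ext y
    simpa using ((hasDerivAt_id' y).fun_mul (hg y).hasDerivAt).deriv
  rw [hd, ((hg x).hasDerivAt.fun_add ((hasDerivAt_id' x).fun_mul hg'.hasDerivAt)).deriv]
  ring

lemma deriv_deriv_f_div {r : ℝ} (hr : r ≠ 0) :
    deriv (deriv f) r / f r = -(6 + r ^ 2) / (4 * (1 + r ^ 2) ^ 2) := by
  have hu : (1 + r ^ 2) ^ (-(1 / 4 : ℝ)) ≠ 0 := by positivity
  rw [show f = fun y => y * (1 + y ^ 2) ^ (-(1 / 4 : ℝ)) from rfl,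
    deriv_deriv_id_mul (differentiable_one_add_sq_rpow _)
      (hasDerivAt_deriv_one_add_sq_rpow _ r).differentiableAt,
    deriv_one_add_sq_rpow, (hasDerivAt_deriv_one_add_sq_rpow _ r).deriv]
  field_simp
  ring

lemma deriv_deriv_h_div (α r : ℝ) :
    deriv (deriv (h α)) r / h α r = α * ((α + 1) * r ^ 2 - 1) / (1 + r ^ 2) ^ 2 := by
  have hu : (1 + r ^ 2) ^ (-(α / 2)) ≠ 0 := by positivity
  rw [show h α = fun y => (1 + y ^ 2) ^ (-(α / 2)) from rfl,
    (hasDerivAt_deriv_one_add_sq_rpow _ r).deriv, mul_div_cancel_right₀ _ hu]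
  ring

lemma eight_mul_sub_arctan_le {r : ℝ} (hr : 0 ≤ r) :
    8 * (r - arctan r) ≤ (6 + r ^ 2) * arctan r ^ 2 * r := by
  have hq : 0 < 3 + r ^ 2 := by positivity
  have hlow : 3 * r ≤ arctan r * (3 + r ^ 2) := (div_le_iff₀ hq).1 (div_three_add_sq_le_arctan hr)
  have hsq : 9 * r ^ 2 ≤ arctan r ^ 2 * (3 + r ^ 2) ^ 2 := by nlinarith
  refine le_of_mul_le_mul_right ?_ (pow_pos hq 2)
  calc 8 * (r - arctan r) * (3 + r ^ 2) ^ 2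
      ≤ 8 * r ^ 3 * (3 + r ^ 2) := by nlinarith
    _ ≤ (6 + r ^ 2) * r * (9 * r ^ 2) := by nlinarith [pow_nonneg hr 3]
    _ ≤ (6 + r ^ 2) * r * (arctan r ^ 2 * (3 + r ^ 2) ^ 2) := by gcongr
    _ = (6 + r ^ 2) * arctan r ^ 2 * r * (3 + r ^ 2) ^ 2 := by ring

lemma hasDerivAt_G {x : ℝ} (hx : x ≠ 0) :
    HasDerivAt G ((arctan x - x / (1 + x ^ 2)) / arctan x ^ 2) x := by
  have ha : arctan x ≠ 0 := arctan_eq_zero_iff.not.2 hx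
  refine ((hasDerivAt_id' x).div (hasDerivAt_arctan x) ha).congr_deriv ?_
  field_simp

lemma hasDerivAt_deriv_G {x : ℝ} (hx : x ≠ 0) :
    HasDerivAt (deriv G) (2 * (x - arctan x) / ((1 + x ^ 2) ^ 2 * arctan x ^ 3)) x := by
  have ha : arctan x ≠ 0 := arctan_eq_zero_iff.not.2 hx
  have hu : 1 + x ^ 2 ≠ 0 := by positivity
  have hderiv : deriv G =ᶠ[nhds x] fun y => (arctan y - y / (1 + y ^ 2)) / arctan y ^ 2 := by
    filter_upwards [isOpen_ne.mem_nhds hx] with y hy using (hasDerivAt_G hy).deriv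
  refine HasDerivAt.congr_of_eventuallyEq ?_ hderiv
  have hnum : HasDerivAt (fun y => arctan y - y / (1 + y ^ 2))
      (1 / (1 + x ^ 2) - (1 * (1 + x ^ 2) - x * (2 * x)) / (1 + x ^ 2) ^ 2) x :=
    (hasDerivAt_arctan x).sub
      ((hasDerivAt_id' x).div (by simpa using (hasDerivAt_pow 2 x).const_add 1) hu)
  refine (hnum.div ((hasDerivAt_arctan x).fun_pow 2) (pow_ne_zero 2 ha)).congr_deriv ?_
  field_simp
  ring

lemma deriv_deriv_G_div {x : ℝ} (hx : x ≠ 0) :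
    deriv (deriv G) x / G x = 2 * (x - arctan x) / ((1 + x ^ 2) ^ 2 * arctan x ^ 2 * x) := by
  have ha : arctan x ≠ 0 := arctan_eq_zero_iff.not.2 hx
  rw [(hasDerivAt_deriv_G hx).deriv, G]
  field_simp

lemma deriv_deriv_G_div_le {r : ℝ} (hr : 0 < r) :
    deriv (deriv G) r / G r ≤ (6 + r ^ 2) / (4 * (1 + r ^ 2) ^ 2) := by
  have ha : 0 < arctan r := arctan_pos.2 hr
  rw [deriv_deriv_G_div hr.ne', div_le_div_iff₀ (by positivity) (by positivity)]
  nlinarith [mul_le_mul_of_nonneg_right (eight_mul_sub_arctan_le hr.le)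
    (sq_nonneg (1 + r ^ 2))]

/-- Radial Ricci curvature positivity: if `k ≥ 2` and `m > k + 4α(α+1)`, then
`−m·f″/f − k·G″/G − h″/h > 0` for all `r > 0`. -/
theorem statement11 (α : ℝ) (hα : 0 < α) (m k : ℝ) (hk : 2 ≤ k)
    (hm : m > k + 4 * α * (α + 1)) :
    ∀ r : ℝ, 0 < r →
      -m * (deriv (deriv f) r / f r) - k * (deriv (deriv G) r / G r)
        - deriv (deriv (h α)) r / h α r > 0 := by
  intro r hr
  have hG : k * (deriv (deriv G) r / G r) ≤ k * ((6 + r ^ 2) / (4 * (1 + r ^ 2) ^ 2)) :=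
    mul_le_mul_of_nonneg_left (deriv_deriv_G_div_le hr) (by linarith)
  have hpos : 0 < ((m - k) * (6 + r ^ 2) - 4 * α * (α + 1) * r ^ 2 + 4 * α) /
      (4 * (1 + r ^ 2) ^ 2) := by
    refine div_pos ?_ (by positivity)
    nlinarith [mul_le_mul_of_nonneg_right hm.le (by positivity : (0 : ℝ) ≤ 6 + r ^ 2)]
  have hsum : -m * (-(6 + r ^ 2) / (4 * (1 + r ^ 2) ^ 2))
      - k * ((6 + r ^ 2) / (4 * (1 + r ^ 2) ^ 2)) - α * ((α + 1) * r ^ 2 - 1) / (1 + r ^ 2) ^ 2 =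
      ((m - k) * (6 + r ^ 2) - 4 * α * (α + 1) * r ^ 2 + 4 * α) / (4 * (1 + r ^ 2) ^ 2) := by
    field_simp
    ring
  rw [deriv_deriv_f_div hr.ne', deriv_deriv_h_div]
  linarith
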